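/- arXiv:1908.04432 — 6 statements merged into one kernel-verified Lean document; each statement's English description precedes it below -/
import Mathlib

section
/- Two probability mass functions Q1 and Q2 on a finite nonempty type Y are objectively compatible if and only if their supports intersect, i.e. there exists y : Y with Q1 y > 0 and Q2 y > 0. -/
/-!
A point `y` with `P (y, x₁, x₂) > 0` has positive conditional probability given `X₁ = x₁` and
given `X₂ = x₂`, so the supports meet. Conversely, with `X₁ = X₂ = Bool`, put mass
`Q₁ y Q₂ y / 4` on `(y, true, true)` and `(y, false, false)` and fill the off-diagonal cells so
that the `true` row and column are `Q₁ / 2` and `Q₂ / 2`; these cells are nonnegative because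
`Qᵢ ≤ 1`, and the conditioning event has mass `∑ y, Q₁ y Q₂ y / 4 > 0` exactly when the
supports meet.
-/

/-- A probability mass function on a finite type: nonnegative and summing to 1. -/
def IsPmf {Z : Type} [Fintype Z] (P : Z → ℝ) : Prop :=
  (∀ z, 0 ≤ P z) ∧ ∑ z, P z = 1

/-- Objective compatibility of two probability assignments `Q1`, `Q2` on `Y`:
there exist finite nonempty types `X1`, `X2`, a joint pmf `P` on `Y × X1 × X2`,
and outcomes `x1`, `x2` occurring with positive probability, such that each `Qᵢ`
is the conditional distribution of `Y` given `Xᵢ = xᵢ`. -/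
def ObjCompatible {Y : Type} [Fintype Y] (Q1 Q2 : Y → ℝ) : Prop :=
  ∃ (X1 : Type) (_ : Fintype X1) (X2 : Type) (_ : Fintype X2),
    Nonempty X1 ∧ Nonempty X2 ∧
    ∃ (P : Y × X1 × X2 → ℝ) (x1 : X1) (x2 : X2),
      IsPmf P ∧
      0 < ∑ y, P (y, x1, x2) ∧
      (∀ y, Q1 y = (∑ x2', P (y, x1, x2')) / (∑ y', ∑ x2', P (y', x1, x2'))) ∧
      (∀ y, Q2 y = (∑ x1', P (y, x1', x2)) / (∑ y', ∑ x1', P (y', x1', x2)))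

open Finset

lemma div_sum_sum_pos_of_pos {Y X : Type} [Fintype Y] [Fintype X] {f : Y → X → ℝ}
    (hf : ∀ y x, 0 ≤ f y x) {y : Y} {x : X} (hyx : 0 < f y x) : 0 < (∑ x', f y x') / ∑ y', ∑ x', f y' x' := by
  have hrow : 0 < ∑ x', f y x' :=
    (sum_pos_iff_of_nonneg fun x' _ => hf y x').2 ⟨x, mem_univ x, hyx⟩
  have htotal : 0 < ∑ y', ∑ x', f y' x' :=
    (sum_pos_iff_of_nonneg fun y' _ => sum_nonneg fun x' _ => hf y' x').2
      ⟨y, mem_univ y, hrow⟩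
  exact div_pos hrow htotal

lemma IsPmf.le_one {Z : Type} [Fintype Z] {P : Z → ℝ} (hP : IsPmf P) (z : Z) : P z ≤ 1 :=
  hP.2 ▸ single_le_sum (fun z _ => hP.1 z) (mem_univ z)

variable {Y : Type} {Q1 Q2 : Y → ℝ}

noncomputable def compatibleJoint (Q1 Q2 : Y → ℝ) : Y × Bool × Bool → ℝ
  | (y, true, true) | (y, false, false) => Q1 y * Q2 y / 4
  | (y, true, false) => Q1 y / 2 - Q1 y * Q2 y / 4
  | (y, false, true) => Q2 y / 2 - Q1 y * Q2 y / 4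

lemma sum_compatibleJoint_true_left (y : Y) :
    ∑ b, compatibleJoint Q1 Q2 (y, true, b) = Q1 y / 2 := by
  simp only [Fintype.sum_bool, compatibleJoint]
  ring

lemma sum_compatibleJoint_true_right (y : Y) :
    ∑ a, compatibleJoint Q1 Q2 (y, a, true) = Q2 y / 2 := by
  simp only [Fintype.sum_bool, compatibleJoint]
  ring

variable [Fintype Y]

lemma ObjCompatible.exists_pos (h : ObjCompatible Q1 Q2) : ∃ y, 0 < Q1 y ∧ 0 < Q2 y := by
  obtain ⟨X1, _, X2, _, -, -, P, x1, x2, hP, hmass, hQ1, hQ2⟩ := h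
  obtain ⟨y, -, hy⟩ := (sum_pos_iff_of_nonneg fun y _ => hP.1 (y, x1, x2)).1 hmass
  refine ⟨y, ?_, ?_⟩
  · rw [hQ1 y]
    exact div_sum_sum_pos_of_pos (f := fun y b => P (y, x1, b)) (fun _ _ => hP.1 _) hy
  · rw [hQ2 y]
    exact div_sum_sum_pos_of_pos (f := fun y a => P (y, a, x2)) (fun _ _ => hP.1 _) hy

lemma isPmf_compatibleJoint (hQ1 : IsPmf Q1) (hQ2 : IsPmf Q2) :
    IsPmf (compatibleJoint Q1 Q2) := by
  constructor
  · rintro ⟨y, a, b⟩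
    have h1 := hQ1.1 y
    have h2 := hQ2.1 y
    have h1' := hQ1.le_one y
    have h2' := hQ2.le_one y
    cases a <;> cases b <;> simp only [compatibleJoint] <;> nlinarith
  · have hfiber (y : Y) : ∑ ab : Bool × Bool, compatibleJoint Q1 Q2 (y, ab) =
        Q1 y / 2 + Q2 y / 2 := by
      simp only [Fintype.sum_prod_type, Fintype.sum_bool, compatibleJoint]
      ring
    rw [Fintype.sum_prod_type, sum_congr rfl fun y _ => hfiber y, sum_add_distrib,
      ← sum_div, ← sum_div, hQ1.2, hQ2.2]
    norm_num

lemma objCompatible_of_exists_pos (hQ1 : IsPmf Q1) (hQ2 : IsPmf Q2)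
    (h : ∃ y, 0 < Q1 y ∧ 0 < Q2 y) : ObjCompatible Q1 Q2 := by
  obtain ⟨y₀, hy₁, hy₂⟩ := h
  have hmass : 0 < ∑ y, compatibleJoint Q1 Q2 (y, true, true) :=
    (sum_pos_iff_of_nonneg fun y _ => (isPmf_compatibleJoint hQ1 hQ2).1 _).2
      ⟨y₀, mem_univ y₀, by simp only [compatibleJoint]; positivity⟩
  have hrow : ∑ y, ∑ b, compatibleJoint Q1 Q2 (y, true, b) = 1 / 2 := by
    simp only [sum_compatibleJoint_true_left, ← sum_div, hQ1.2]
  have hcol : ∑ y, ∑ a, compatibleJoint Q1 Q2 (y, a, true) = 1 / 2 := by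
    simp only [sum_compatibleJoint_true_right, ← sum_div, hQ2.2]
  refine ⟨Bool, inferInstance, Bool, inferInstance, ⟨true⟩, ⟨true⟩, compatibleJoint Q1 Q2,
    true, true, isPmf_compatibleJoint hQ1 hQ2, hmass, fun y => ?_, fun y => ?_⟩
  · rw [sum_compatibleJoint_true_left, hrow]
    ring
  · rw [sum_compatibleJoint_true_right, hcol]
    ring

theorem objCompatible_iff_supports_intersect_general
    {Y : Type} [Fintype Y] (Q1 Q2 : Y → ℝ)
    (hQ1 : IsPmf Q1) (hQ2 : IsPmf Q2) :
    ObjCompatible Q1 Q2 ↔ ∃ y : Y, 0 < Q1 y ∧ 0 < Q2 y :=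
  ⟨ObjCompatible.exists_pos, objCompatible_of_exists_pos hQ1 hQ2⟩

/-- Two pmfs on a finite nonempty type are objectively compatible iff their
supports intersect. -/
theorem objCompatible_iff_supports_intersect
    {Y : Type} [Fintype Y] [Nonempty Y] (Q1 Q2 : Y → ℝ)
    (hQ1 : IsPmf Q1) (hQ2 : IsPmf Q2) :
    ObjCompatible Q1 Q2 ↔ ∃ y : Y, 0 < Q1 y ∧ 0 < Q2 y :=
  objCompatible_iff_supports_intersect_general Q1 Q2 hQ1 hQ2
end

section
/- Two probability mass functions Q1 and Q2 on a finite nonempty type Y are subjectively compatible if and only if their supports intersect, i.e. there exists y : Y with Q1 y > 0 and Q2 y > 0. -/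
/-- Subjective compatibility of two probability assignments `Q1`, `Q2` on `Y`:
there exist a finite nonempty type `X` and a stochastic kernel `K : Y → X → ℝ`
such that every outcome `x` has positive predicted probability under both
assignments, and the Bayesian updates of `Q1` and `Q2` agree on some outcome `xt`. -/
def SubjCompatible {Y : Type} [Fintype Y] (Q1 Q2 : Y → ℝ) : Prop :=
  ∃ (X : Type) (_ : Fintype X),
    Nonempty X ∧
    ∃ K : Y → X → ℝ,
      (∀ y x, 0 ≤ K y x) ∧
      (∀ y, ∑ x, K y x = 1) ∧
      (∀ x, 0 < ∑ y, K y x * Q1 y ∧ 0 < ∑ y, K y x * Q2 y) ∧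
      ∃ xt : X, ∀ y,
        (K y xt * Q1 y) / (∑ y', K y' xt * Q1 y') =
        (K y xt * Q2 y) / (∑ y', K y' xt * Q2 y')

noncomputable def posterior {Y X : Type} [Fintype Y] (K : Y → X → ℝ) (Q : Y → ℝ) (x : X)
    (y : Y) : ℝ :=
  K y x * Q y / ∑ y', K y' x * Q y'

def bernoulliKernel {Y : Type} (t : Y → ℝ) (y : Y) : Bool → ℝ :=
  fun b => if b then t y else 1 - t y

theorem bernoulliKernel_nonneg {Y : Type} {t : Y → ℝ} (ht0 : ∀ y, 0 ≤ t y) (ht1 : ∀ y, t y ≤ 1)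
    (y : Y) (b : Bool) : 0 ≤ bernoulliKernel t y b := by
  cases b <;> simp [bernoulliKernel, ht0, ht1]

theorem sum_bernoulliKernel {Y : Type} (t : Y → ℝ) (y : Y) : ∑ b, bernoulliKernel t y b = 1 := by
  simp [bernoulliKernel]

theorem bernoulliKernel_single_nonneg {Y : Type} [DecidableEq Y] {y₀ : Y} {c : ℝ}
    (hc0 : 0 ≤ c) (hc1 : c ≤ 1) (y : Y) (b : Bool) :
    0 ≤ bernoulliKernel (Pi.single y₀ c) y b := by
  refine bernoulliKernel_nonneg (fun y => ?_) (fun y => ?_) y b <;>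
    by_cases hy : y = y₀ <;> simp [hy, hc0, hc1]

section

variable {Y : Type} [Fintype Y]

theorem exists_pos_pos_of_posterior_eq {X : Type} {K : Y → X → ℝ} (hK : ∀ y x, 0 ≤ K y x)
    {Q1 Q2 : Y → ℝ} {x : X} (h1 : 0 < ∑ y, K y x * Q1 y) (h2 : 0 < ∑ y, K y x * Q2 y)
    (heq : posterior K Q1 x = posterior K Q2 x) : ∃ y, 0 < Q1 y ∧ 0 < Q2 y := by
  obtain ⟨y, -, hy1⟩ := Finset.exists_lt_of_sum_lt (f := fun _ => 0)
    (g := fun y => K y x * Q1 y) (by simpa using h1)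
  have hy2 : 0 < K y x * Q2 y := by
    have : 0 < posterior K Q2 x y := heq ▸ div_pos hy1 h1
    exact (div_pos_iff_of_pos_right h2).mp this
  exact ⟨y, pos_of_mul_pos_right hy1 (hK y x), pos_of_mul_pos_right hy2 (hK y x)⟩

theorem SubjCompatible.exists_pos_pos {Q1 Q2 : Y → ℝ} (h : SubjCompatible Q1 Q2) :
    ∃ y, 0 < Q1 y ∧ 0 < Q2 y := by
  obtain ⟨X, _, -, K, hK, -, hpos, xt, heq⟩ := h
  exact exists_pos_pos_of_posterior_eq hK (hpos xt).1 (hpos xt).2 (funext heq)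

variable [DecidableEq Y] {y₀ : Y} {c : ℝ}

theorem sum_bernoulliKernel_single_mul_pos (hc0 : 0 < c) (hc1 : c < 1) {Q : Y → ℝ}
    (hQ : ∀ y, 0 ≤ Q y) (hy₀ : 0 < Q y₀) (b : Bool) :
    0 < ∑ y, bernoulliKernel (Pi.single y₀ c) y b * Q y := by
  refine Finset.sum_pos'
    (fun y _ => mul_nonneg (bernoulliKernel_single_nonneg hc0.le hc1.le y b) (hQ y))
    ⟨y₀, Finset.mem_univ _, mul_pos ?_ hy₀⟩
  cases b <;> simp [bernoulliKernel, hc0, hc1]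

theorem posterior_bernoulliKernel_single_true {Q : Y → ℝ} (hc : c ≠ 0) (hy₀ : Q y₀ ≠ 0) :
    posterior (bernoulliKernel (Pi.single y₀ c)) Q true = Pi.single y₀ 1 := by
  funext y
  have hmul : ∀ y, (Pi.single y₀ c : Y → ℝ) y * Q y = (Pi.single y₀ (c * Q y₀) : Y → ℝ) y := by
    intro y; by_cases hy : y = y₀ <;> simp [hy]
  simp only [posterior, bernoulliKernel, if_true, hmul, Fintype.sum_pi_single']
  by_cases hy : y = y₀
  · subst hy; simp [hc, hy₀]
  · simp [hy]

theorem subjCompatible_of_pos_pos {Q1 Q2 : Y → ℝ} (hQ1 : ∀ y, 0 ≤ Q1 y) (hQ2 : ∀ y, 0 ≤ Q2 y)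
    (h1 : 0 < Q1 y₀) (h2 : 0 < Q2 y₀) : SubjCompatible Q1 Q2 := by
  have hc0 : (0 : ℝ) < 1 / 2 := by norm_num
  have hc1 : (1 / 2 : ℝ) < 1 := by norm_num
  refine ⟨Bool, inferInstance, ⟨true⟩, bernoulliKernel (Pi.single y₀ (1 / 2)),
    bernoulliKernel_single_nonneg hc0.le hc1.le, sum_bernoulliKernel _,
    fun b => ⟨sum_bernoulliKernel_single_mul_pos hc0 hc1 hQ1 h1 b,
      sum_bernoulliKernel_single_mul_pos hc0 hc1 hQ2 h2 b⟩, true, fun y => ?_⟩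
  exact congrFun ((posterior_bernoulliKernel_single_true hc0.ne' h1.ne').trans
    (posterior_bernoulliKernel_single_true hc0.ne' h2.ne').symm) y

end

theorem subjCompatible_iff_supports_intersect_general
    {Y : Type} [Fintype Y] (Q1 Q2 : Y → ℝ)
    (hQ1 : IsPmf Q1) (hQ2 : IsPmf Q2) :
    SubjCompatible Q1 Q2 ↔ ∃ y : Y, 0 < Q1 y ∧ 0 < Q2 y := by
  classical
  exact ⟨SubjCompatible.exists_pos_pos,
    fun ⟨_, h1, h2⟩ => subjCompatible_of_pos_pos hQ1.1 hQ2.1 h1 h2⟩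

/-- Two pmfs on a finite nonempty type are subjectively compatible iff their
supports intersect. -/
theorem subjCompatible_iff_supports_intersect
    {Y : Type} [Fintype Y] [Nonempty Y] (Q1 Q2 : Y → ℝ)
    (hQ1 : IsPmf Q1) (hQ2 : IsPmf Q2) :
    SubjCompatible Q1 Q2 ↔ ∃ y : Y, 0 < Q1 y ∧ 0 < Q2 y :=
  subjCompatible_iff_supports_intersect_general Q1 Q2 hQ1 hQ2
end

section
/- Let Y be a two-element type and let Q1 = (p, 1 - p) and Q2 = (q, 1 - q) be two pmfs on Y with p ≠ q. If p and q both lie in the open interval (0, 1), then Q1 and Q2 are objectively compatible. -/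
/-!
Take `X1` trivial and `X2 = Bool`, and split `Q1` as `t • Q2 + (Q1 - t • Q2)` for some `t > 0`
with `t • Q2 ≤ Q1`, putting the first summand on `X2 = true` and the second on `X2 = false`.
Conditioning on the trivial `X1` gives back `Q1`, and conditioning on `X2 = true` gives `Q2`.
Such a `t` exists as soon as `Q1` has full support, e.g. `t = min_y Q1 y`, since `Q2 ≤ 1`.
-/

namespace IsPmf

variable {Z : Type} [Fintype Z] {P : Z → ℝ}

lemma nonempty (hP : IsPmf P) : Nonempty Z := by
  by_contra hZ
  rw [not_nonempty_iff] at hZ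
  simpa using hP.2

lemma le_one_s3 (hP : IsPmf P) (z : Z) : P z ≤ 1 :=
  hP.2 ▸ Finset.single_le_sum (fun z _ => hP.1 z) (Finset.mem_univ z)

lemma fin_two {p : ℝ} (hp : p ∈ Set.Icc (0 : ℝ) 1) : IsPmf (![p, 1 - p] : Fin 2 → ℝ) := by
  refine ⟨fun i => ?_, by simp⟩
  fin_cases i <;> simp [hp.1, hp.2]

end IsPmf

variable {Y : Type} [Fintype Y] {Q1 Q2 : Y → ℝ}

lemma objCompatible_of_smul_le (hQ1 : IsPmf Q1) (hQ2 : IsPmf Q2) {t : ℝ} (ht : 0 < t)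
    (hle : ∀ y, t * Q2 y ≤ Q1 y) : ObjCompatible Q1 Q2 := by
  set P : Y × Unit × Bool → ℝ := fun z => if z.2.2 then t * Q2 z.1 else Q1 z.1 - t * Q2 z.1
  have hP_true (y : Y) : P (y, (), true) = t * Q2 y := if_pos rfl
  have hP_x1 (y : Y) : ∑ b, P (y, (), b) = Q1 y := by simp [P]
  have hmass_true : ∑ y, P (y, (), true) = t := by
    simp_rw [hP_true, ← Finset.mul_sum, hQ2.2, mul_one]
  refine ⟨Unit, inferInstance, Bool, inferInstance, inferInstance, inferInstance, P, (), true,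
    ⟨?_, ?_⟩, hmass_true ▸ ht, fun y => ?_, fun y => ?_⟩
  · rintro ⟨y, u, (_ | _)⟩
    · simpa [P] using hle y
    · simpa [P] using mul_nonneg ht.le (hQ2.1 y)
  · simp only [Fintype.sum_prod_type, Fintype.sum_unique]
    simp_rw [hP_x1, hQ1.2]
  · simp_rw [hP_x1, hQ1.2, div_one]
  · simp only [Fintype.sum_unique]
    rw [hmass_true, hP_true, mul_div_cancel_left₀ _ ht.ne']

lemma objCompatible_of_pos (hQ1 : IsPmf Q1) (hpos : ∀ y, 0 < Q1 y) (hQ2 : IsPmf Q2) :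
    ObjCompatible Q1 Q2 := by
  have := hQ1.nonempty
  obtain ⟨y₀, hy₀⟩ := Finite.exists_min Q1
  refine objCompatible_of_smul_le hQ1 hQ2 (hpos y₀) fun y => ?_
  calc Q1 y₀ * Q2 y ≤ Q1 y₀ * 1 := by gcongr; exacts [(hpos y₀).le, hQ2.le_one_s3 y]
    _ ≤ Q1 y := by simpa using hy₀ y

theorem objCompatible_of_interior_general
    (p q : ℝ) (hp : p ∈ Set.Ioo (0 : ℝ) 1) (hq : q ∈ Set.Ioo (0 : ℝ) 1) :
    ObjCompatible (![p, 1 - p] : Fin 2 → ℝ) (![q, 1 - q] : Fin 2 → ℝ) := by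
  refine objCompatible_of_pos (.fin_two (Set.Ioo_subset_Icc_self hp)) (fun i => ?_)
    (.fin_two (Set.Ioo_subset_Icc_self hq))
  fin_cases i <;> simp [hp.1, hp.2]

/-- On a two-element type, the pmfs `(p, 1 - p)` and `(q, 1 - q)` with `p ≠ q`
and `p, q ∈ (0, 1)` are objectively compatible. -/
theorem objCompatible_of_interior
    (p q : ℝ) (hpq : p ≠ q) (hp : p ∈ Set.Ioo (0 : ℝ) 1) (hq : q ∈ Set.Ioo (0 : ℝ) 1) :
    ObjCompatible (![p, 1 - p] : Fin 2 → ℝ) (![q, 1 - q] : Fin 2 → ℝ) :=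
  objCompatible_of_interior_general p q hp hq
end

section
/- Two density matrices σ1 and σ2 on ℂ^n (n ≥ 1) are objectively compatible if and only if the ranges of σ1 and σ2, viewed as linear endomorphisms of ℂ^n, have nontrivial intersection: range(σ1) ⊓ range(σ2) ≠ ⊥ (i.e. there exists a nonzero vector v ∈ ℂ^n lying in the column space of σ1 and in the column space of σ2). -/
open scoped ComplexOrder

/-- A density matrix on `ℂ^n`: a positive semidefinite matrix of trace `1`. -/
def IsDensityMatrix {n : ℕ} (σ : Matrix (Fin n) (Fin n) ℂ) : Prop :=
  σ.PosSemidef ∧ σ.trace = 1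

/-- Objective compatibility of two quantum state assignments `σ1`, `σ2` on `ℂ^n`:
there exist finite nonempty classical variables `X1`, `X2`, a hybrid state
`ρ : X1 → X2 → Matrix (Fin n) (Fin n) ℂ` (each component positive semidefinite,
total trace `1`), and outcomes `x1`, `x2` occurring with positive probability,
such that each `σᵢ` is the conditioned (normalized reduced) state given `Xᵢ = xᵢ`. -/
def QObjCompatible {n : ℕ} (σ1 σ2 : Matrix (Fin n) (Fin n) ℂ) : Prop :=
  ∃ (X1 : Type) (_ : Fintype X1) (X2 : Type) (_ : Fintype X2),
    Nonempty X1 ∧ Nonempty X2 ∧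
    ∃ (ρ : X1 → X2 → Matrix (Fin n) (Fin n) ℂ) (x1 : X1) (x2 : X2),
      (∀ a b, (ρ a b).PosSemidef) ∧
      (∑ a, ∑ b, (ρ a b).trace = 1) ∧
      0 < ((ρ x1 x2).trace).re ∧
      σ1 = ((∑ b, ρ x1 b).trace)⁻¹ • (∑ b, ρ x1 b) ∧
      σ2 = ((∑ a, ρ a x2).trace)⁻¹ • (∑ a, ρ a x2)

/-!
If `ρ x1 x2` has positive trace, it is a nonzero positive semidefinite matrix lying below (in the
Loewner order) both unnormalized conditional states, and a positive semidefinite `A ≤ B` has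
`range A ≤ range B` (for Hermitian matrices, range inclusion is dual to the reverse kernel
inclusion). Hence `range (ρ x1 x2)` is a nonzero common subspace of the two ranges.

Conversely, if `v ≠ 0` lies in both ranges, the Cauchy–Schwarz inequality for the semi-inner
products `xᴴ σᵢ y` yields `ε > 0` with `P = ε • v vᴴ ≤ σ1, σ2`, and
`ρ = ½ [[P, σ1 - P], [σ2 - P, P]]` conditions to `σ1` on its first row and to `σ2` on its first
column.
-/

open scoped MatrixOrder
open Matrix LinearMap

namespace Matrix

variable {n 𝕜 : Type*} [Fintype n] [RCLike 𝕜]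

theorem PosSemidef.vecMulVec_mulVec_le {σ : Matrix n n 𝕜} (hσ : σ.PosSemidef) (w : n → 𝕜) :
    vecMulVec (σ *ᵥ w) (star (σ *ᵥ w)) ≤ RCLike.re (star w ⬝ᵥ σ *ᵥ w) • σ := by
  let _ := σ.toSeminormedAddCommGroup hσ
  let _ := σ.toInnerProductSpace hσ
  have hinner (x y : n → 𝕜) : inner 𝕜 x y = star x ⬝ᵥ σ *ᵥ y := dotProduct_comm _ _
  refine PosSemidef.of_dotProduct_mulVec_nonneg
    ((hσ.smul (hσ.re_dotProduct_nonneg w)).isHermitian.sub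
      (posSemidef_vecMulVec_self_star _).isHermitian) fun x => ?_
  set z := star w ⬝ᵥ σ *ᵥ x
  have hσw : star (σ *ᵥ w) ⬝ᵥ x = z := by
    rw [star_mulVec, hσ.isHermitian.eq, ← dotProduct_mulVec]
  have hz : star x ⬝ᵥ vecMulVec (σ *ᵥ w) (star (σ *ᵥ w)) *ᵥ x = ((‖z‖ ^ 2 : ℝ) : 𝕜) := by
    rw [vecMulVec_mulVec, hσw, dotProduct_smul, ← hinner, ← inner_conj_symm, hinner,
      op_smul_eq_mul, RCLike.conj_mul]
    push_cast; rfl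
  have hq : star x ⬝ᵥ σ *ᵥ x = ((RCLike.re (star x ⬝ᵥ σ *ᵥ x) : ℝ) : 𝕜) :=
    (RCLike.conj_eq_iff_re.mp <| RCLike.conj_eq_iff_im.mpr <|
      (RCLike.nonneg_iff.mp (hσ.dotProduct_mulVec_nonneg x)).2).symm
  have hcs : ‖z‖ ^ 2 ≤ RCLike.re (star w ⬝ᵥ σ *ᵥ w) * RCLike.re (star x ⬝ᵥ σ *ᵥ x) := by
    have := inner_mul_inner_self_le (𝕜 := 𝕜) w x
    rwa [norm_inner_symm x w, ← sq, hinner, hinner, hinner] at this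
  rw [sub_mulVec, dotProduct_sub, smul_mulVec, dotProduct_smul, hz, hq,
    RCLike.real_smul_eq_coe_mul]
  norm_cast
  exact RCLike.ofReal_nonneg.mpr (sub_nonneg.mpr hcs)

variable [DecidableEq n]

theorem IsHermitian.range_toLin'_le_iff {A B : Matrix n n 𝕜} (hA : A.IsHermitian)
    (hB : B.IsHermitian) :
    range (toLin' A) ≤ range (toLin' B) ↔ ker (toLin' B) ≤ ker (toLin' A) := by
  let e := (WithLp.linearEquiv 2 𝕜 (n → 𝕜)).symm
  have hrange (M : Matrix n n 𝕜) :
      range (toEuclideanLin M) = (range (toLin' M)).map e.toLinearMap := by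
    ext x
    simp only [e, mem_range, Submodule.mem_map, toLpLin_apply, WithLp.ext_iff]
    exact ⟨fun ⟨y, hy⟩ => ⟨_, ⟨y.ofLp, rfl⟩, hy⟩, fun ⟨_, ⟨y, rfl⟩, hy⟩ => ⟨WithLp.toLp 2 y, hy⟩⟩
  have hker (M : Matrix n n 𝕜) : ker (toEuclideanLin M) = (ker (toLin' M)).map e.toLinearMap := by
    ext x
    simp [e, toLpLin_apply, WithLp.ext_iff]
  have := ContinuousLinearMap.ker_le_ker_iff_range_le_range
    (T := (toEuclideanLin A).toContinuousLinearMap) (U := (toEuclideanLin B).toContinuousLinearMap)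
    (isSymmetric_toEuclideanLin_iff.mpr hA) (isSymmetric_toEuclideanLin_iff.mpr hB)
  simp only [LinearMap.coe_toContinuousLinearMap, hrange, hker,
    Submodule.map_le_map_iff_of_injective e.injective] at this
  exact this.symm

theorem range_toLin'_mono {A B : Matrix n n 𝕜} (hA : A.PosSemidef) (hAB : A ≤ B) :
    range (toLin' A) ≤ range (toLin' B) := by
  have hB : B.PosSemidef := (hA.nonneg.trans hAB).posSemidef
  refine (hA.isHermitian.range_toLin'_le_iff hB.isHermitian).mpr fun x hx => ?_
  rw [mem_ker, toLin'_apply] at hx ⊢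
  have hsum : star x ⬝ᵥ A *ᵥ x + star x ⬝ᵥ (B - A) *ᵥ x = 0 := by
    rw [← dotProduct_add, ← add_mulVec, add_sub_cancel, hx, dotProduct_zero]
  have hAx := (add_eq_zero_iff_of_nonneg (hA.dotProduct_mulVec_nonneg x)
    ((le_iff.mp hAB).dotProduct_mulVec_nonneg x)).mp hsum
  exact (hA.dotProduct_mulVec_zero_iff x).mp hAx.1

theorem range_toLin'_le_range_smul_sum {ι : Type*} [Fintype ι] {ρ : ι → Matrix n n 𝕜}
    (hρ : ∀ j, (ρ j).PosSemidef) (i : ι) {c : 𝕜} (hc : c • ∑ j, ρ j ≠ 0) :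
    range (toLin' (ρ i)) ≤ range (toLin' (c • ∑ j, ρ j)) := by
  rw [map_smul, range_smul _ _ (left_ne_zero_of_smul hc)]
  exact range_toLin'_mono (hρ i)
    (Finset.single_le_sum (fun j _ => (hρ j).nonneg) (Finset.mem_univ i))

theorem PosSemidef.exists_pos_smul_vecMulVec_le {σ : Matrix n n 𝕜} (hσ : σ.PosSemidef)
    {v : n → 𝕜} (hv : v ∈ range (toLin' σ)) : ∃ c : ℝ, 0 < c ∧ c • vecMulVec v (star v) ≤ σ := by
  obtain ⟨w, rfl⟩ := hv
  rw [toLin'_apply]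
  set r := RCLike.re (star w ⬝ᵥ σ *ᵥ w)
  have hr : 0 ≤ r := hσ.re_dotProduct_nonneg w
  refine ⟨(1 + r)⁻¹, by positivity, ?_⟩
  calc (1 + r)⁻¹ • vecMulVec (σ *ᵥ w) (star (σ *ᵥ w))
      ≤ (1 + r)⁻¹ • r • σ :=
        smul_le_smul_of_nonneg_left (hσ.vecMulVec_mulVec_le w) (by positivity)
    _ ≤ (1 + r)⁻¹ • (1 + r) • σ :=
        smul_le_smul_of_nonneg_left (smul_le_smul_of_nonneg_right (by linarith) hσ.nonneg)
          (by positivity)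
    _ = σ := inv_smul_smul₀ (by positivity) σ

end Matrix

theorem IsDensityMatrix.ne_zero {n : ℕ} {σ : Matrix (Fin n) (Fin n) ℂ} (hσ : IsDensityMatrix σ) :
    σ ≠ 0 := by
  rintro rfl
  simpa using hσ.2

theorem QObjCompatible.of_le {n : ℕ} {σ1 σ2 P : Matrix (Fin n) (Fin n) ℂ}
    (h1 : IsDensityMatrix σ1) (h2 : IsDensityMatrix σ2) (hP : P.PosSemidef) (hP0 : P ≠ 0)
    (hP1 : P ≤ σ1) (hP2 : P ≤ σ2) : QObjCompatible σ1 σ2 := by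
  let ρ : Fin 2 → Fin 2 → Matrix (Fin n) (Fin n) ℂ :=
    fun a b => (2 : ℂ)⁻¹ • ![![P, σ1 - P], ![σ2 - P, P]] a b
  have hrow : ∑ b, ρ 0 b = (2 : ℂ)⁻¹ • σ1 := by simp [ρ, Fin.sum_univ_two, ← smul_add]
  have hcol : ∑ a, ρ a 0 = (2 : ℂ)⁻¹ • σ2 := by simp [ρ, Fin.sum_univ_two, ← smul_add]
  refine ⟨Fin 2, inferInstance, Fin 2, inferInstance, ⟨0⟩, ⟨0⟩, ρ, 0, 0, ?_, ?_, ?_, ?_, ?_⟩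
  · have hhalf : (0 : ℂ) ≤ 2⁻¹ := inv_nonneg.mpr zero_le_two
    intro a b
    fin_cases a <;> fin_cases b
    exacts [hP.smul hhalf, (le_iff.mp hP1).smul hhalf, (le_iff.mp hP2).smul hhalf, hP.smul hhalf]
  · simp [ρ, Fin.sum_univ_two, trace_sub, h1.2, h2.2]
    ring
  · have htr : 0 < P.trace := hP.trace_nonneg.lt_of_ne' ((hP.trace_eq_zero_iff).not.mpr hP0)
    simpa [ρ] using (Complex.pos_iff.mp htr).1
  · rw [hrow, trace_smul, h1.2, smul_smul]; norm_num
  · rw [hcol, trace_smul, h2.2, smul_smul]; norm_num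

theorem qObjCompatible_iff_ranges_intersect_general
    {n : ℕ} (σ1 σ2 : Matrix (Fin n) (Fin n) ℂ)
    (h1 : IsDensityMatrix σ1) (h2 : IsDensityMatrix σ2) :
    QObjCompatible σ1 σ2 ↔
      LinearMap.range (Matrix.toLin' σ1) ⊓ LinearMap.range (Matrix.toLin' σ2) ≠ ⊥ := by
  constructor
  · rintro ⟨X1, _, X2, _, -, -, ρ, x1, x2, hρ, -, hpos, rfl, rfl⟩
    have hρ0 : range (toLin' (ρ x1 x2)) ≠ ⊥ := by
      rw [Ne, range_eq_bot, LinearEquiv.map_eq_zero_iff]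
      rintro h
      simp [h] at hpos
    exact ne_bot_of_le_ne_bot hρ0 <| le_inf
      (range_toLin'_le_range_smul_sum (hρ x1) x2 h1.ne_zero)
      (range_toLin'_le_range_smul_sum (fun a => hρ a x2) x1 h2.ne_zero)
  · intro h
    obtain ⟨v, hv, hv0⟩ := (Submodule.ne_bot_iff _).mp h
    obtain ⟨c1, hc1, hle1⟩ := h1.1.exists_pos_smul_vecMulVec_le (Submodule.mem_inf.mp hv).1
    obtain ⟨c2, hc2, hle2⟩ := h2.1.exists_pos_smul_vecMulVec_le (Submodule.mem_inf.mp hv).2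
    have hP := posSemidef_vecMulVec_self_star v
    exact QObjCompatible.of_le h1 h2 (P := min c1 c2 • vecMulVec v (star v))
      (hP.smul (lt_min hc1 hc2).le)
      (smul_ne_zero (lt_min hc1 hc2).ne' (vecMulVec_ne_zero hv0 (star_ne_zero.mpr hv0)))
      ((smul_le_smul_of_nonneg_right (min_le_left _ _) hP.nonneg).trans hle1)
      ((smul_le_smul_of_nonneg_right (min_le_right _ _) hP.nonneg).trans hle2)

/-- Two density matrices on `ℂ^n` (`n ≥ 1`) are objectively compatible iff
their ranges (column spaces) have nontrivial intersection. -/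
theorem qObjCompatible_iff_ranges_intersect
    {n : ℕ} (hn : 1 ≤ n) (σ1 σ2 : Matrix (Fin n) (Fin n) ℂ)
    (h1 : IsDensityMatrix σ1) (h2 : IsDensityMatrix σ2) :
    QObjCompatible σ1 σ2 ↔
      LinearMap.range (Matrix.toLin' σ1) ⊓ LinearMap.range (Matrix.toLin' σ2) ≠ ⊥ :=
  qObjCompatible_iff_ranges_intersect_general σ1 σ2 h1 h2
end

section
/- Two density matrices σ1 and σ2 on ℂ^n (n ≥ 1) are subjectively compatible if and only if the ranges of σ1 and σ2, viewed as linear endomorphisms of ℂ^n, have nontrivial intersection: range(σ1) ⊓ range(σ2) ≠ ⊥. -/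
open scoped ComplexOrder

/-- The positive semidefinite square root of a positive semidefinite matrix (Mathlib's former
`Matrix.PosSemidef.sqrt`, removed upstream; restated with its old definition). -/
noncomputable def Matrix.PosSemidef.sqrt {n : Type*} [Fintype n] [DecidableEq n] {𝕜 : Type*}
    [RCLike 𝕜] {A : Matrix n n 𝕜} (hA : A.PosSemidef) : Matrix n n 𝕜 :=
  (hA.1.eigenvectorUnitary : Matrix n n 𝕜) *
    Matrix.diagonal ((↑) ∘ (√·) ∘ hA.1.eigenvalues) *
    (star hA.1.eigenvectorUnitary : Matrix n n 𝕜)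

/-- Subjective compatibility of two positive semidefinite state assignments
`σ1`, `σ2` on `ℂ^n`: there exist a finite nonempty type `X` and a POVM
`E : X → Matrix (Fin n) (Fin n) ℂ` such that every outcome has positive
probability under both states, and for some outcome `xt` the quantum Bayesian
updates `(tr (E xt * σᵢ))⁻¹ • (√σᵢ * E xt * √σᵢ)` of the two states agree. -/
def QSubjCompatible {n : ℕ} {σ1 σ2 : Matrix (Fin n) (Fin n) ℂ}
    (h1 : σ1.PosSemidef) (h2 : σ2.PosSemidef) : Prop :=
  ∃ (X : Type) (_ : Fintype X),
    Nonempty X ∧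
    ∃ E : X → Matrix (Fin n) (Fin n) ℂ,
      (∀ x, (E x).PosSemidef) ∧
      (∑ x, E x = 1) ∧
      (∀ x, 0 < ((E x * σ1).trace).re ∧ 0 < ((E x * σ2).trace).re) ∧
      ∃ xt : X,
        ((E xt * σ1).trace)⁻¹ • (h1.sqrt * E xt * h1.sqrt) =
        ((E xt * σ2).trace)⁻¹ • (h2.sqrt * E xt * h2.sqrt)

/-!
If the updates of `σ₁` and `σ₂` agree on some outcome `E`, then `√σ₁ E √σ₁` is a nonzero
(its trace is the positive probability `tr (E σ₁)`) multiple of `√σ₂ E √σ₂`, so its range lies in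
`range √σ₁ ⊓ range √σ₂ = range σ₁ ⊓ range σ₂`.

Conversely, positive semidefinite `A`, `B` with intersecting ranges admit a vector `u` with `A u`
and `B u` nonzero and parallel. If `A + B = R²` is invertible, `D = R⁻¹ A R⁻¹` and
`1 - D = R⁻¹ B R⁻¹` are Hermitian, and `R⁻¹ v` for a common `v ≠ 0` of the ranges lies in the ranges
of both, so `D` has an eigenvector `x` with eigenvalue `t ∉ {0, 1}`; then `u = R⁻¹ x` gives
`A u = t R x` and `B u = (1 - t) R x`. In general, adding to `B` the projection onto
`ker (A + B)` makes `A + B` invertible without affecting `A u`, `B u`. For `A = √σ₁`, `B = √σ₂`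
the two-outcome POVM `{P / 2, 1 - P / 2}`, with `P` the projection onto `ℂ u`, then has
positive probabilities, and both updates on its first outcome are the projection onto `ℂ (√σ₁ u)`.
-/

open scoped MatrixOrder
open Matrix

namespace Matrix

variable {n 𝕜 : Type*} [Fintype n] [RCLike 𝕜]

lemma PosSemidef.mulVec_eq_zero_of_add_mulVec_eq_zero {A B : Matrix n n 𝕜} (hA : A.PosSemidef)
    (hB : B.PosSemidef) {z : n → 𝕜} (h : (A + B) *ᵥ z = 0) : A *ᵥ z = 0 := by
  have hsum : star z ⬝ᵥ A *ᵥ z + star z ⬝ᵥ B *ᵥ z = 0 := by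
    rw [← dotProduct_add, ← add_mulVec, h, dotProduct_zero]
  rw [← hA.dotProduct_mulVec_zero_iff]
  exact ((add_eq_zero_iff_of_nonneg (hA.dotProduct_mulVec_nonneg z)
    (hB.dotProduct_mulVec_nonneg z)).mp hsum).1

/-- The orthogonal projection onto `span {w}`; it is `0` when `w = 0`, since `0⁻¹ = 0`. -/
noncomputable def lineProj (w : n → 𝕜) : Matrix n n 𝕜 :=
  (star w ⬝ᵥ w)⁻¹ • vecMulVec w (star w)

lemma lineProj_smul {c : 𝕜} (hc : c ≠ 0) (w : n → 𝕜) : lineProj (c • w) = lineProj w := by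
  have hc' : star c ≠ 0 := star_ne_zero.mpr hc
  simp only [lineProj, star_smul, smul_dotProduct, dotProduct_smul, smul_vecMulVec,
    vecMulVec_smul, smul_smul, smul_eq_mul]
  congr 1
  field_simp

lemma isStarProjection_lineProj {w : n → 𝕜} (hw : w ≠ 0) : IsStarProjection (lineProj w) := by
  have hs : star w ⬝ᵥ w ≠ 0 := dotProduct_star_self_eq_zero.not.mpr hw
  constructor
  · rw [IsIdempotentElem, lineProj, smul_mul_smul, vecMulVec_mul_vecMulVec, vecMulVec_smul,
      smul_smul, mul_assoc, inv_mul_cancel₀ hs, mul_one]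
  · have hss : star (star w ⬝ᵥ w) = star w ⬝ᵥ w := (star_dotProduct ..).symm
    rw [IsSelfAdjoint, lineProj, star_smul, star_inv₀, hss, star_eq_conjTranspose,
      conjTranspose_vecMulVec, star_star]

lemma IsHermitian.mul_smul_vecMulVec_mul {X : Matrix n n 𝕜} (hX : X.IsHermitian) (a : 𝕜)
    (u : n → 𝕜) :
    X * (a • vecMulVec u (star u)) * X = a • vecMulVec (X *ᵥ u) (star (X *ᵥ u)) := by
  rw [Matrix.mul_smul, Matrix.smul_mul, mul_vecMulVec, vecMulVec_mul, star_mulVec, hX.eq]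

variable [DecidableEq n]

lemma PosSemidef.mul_eq_zero_of_add_mul_eq_zero {A B : Matrix n n 𝕜} (hA : A.PosSemidef)
    (hB : B.PosSemidef) {P : Matrix n n 𝕜} (h : (A + B) * P = 0) : A * P = 0 := by
  refine toLin'.injective (LinearMap.ext fun z => ?_)
  simpa [toLin'_apply, ← mulVec_mulVec] using
    hA.mulVec_eq_zero_of_add_mulVec_eq_zero hB (z := P *ᵥ z) (by rw [mulVec_mulVec, h, zero_mulVec])

lemma IsHermitian.exists_isStarProjection_mul_eq_zero {C : Matrix n n 𝕜} (hC : C.IsHermitian) :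
    ∃ P : Matrix n n 𝕜, IsStarProjection P ∧ C * P = 0 ∧ IsUnit (C + P) := by
  set f : ℝ → ℝ := fun x => if x = 0 then 1 else 0
  have hf : ContinuousOn f (spectrum ℝ C) := C.finite_real_spectrum.continuousOn f
  refine ⟨cfc f C, ⟨?_, cfc_predicate f C⟩, ?_, ?_⟩
  · rw [IsIdempotentElem, ← cfc_mul f f C]
    congr 1 with x
    by_cases hx : x = 0 <;> simp [f, hx]
  · have h := cfc_mul (fun x => x) f C
    rw [cfc_id' ℝ C] at h
    rw [← h, ← cfc_zero ℝ C]
    congr 1 with x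
    by_cases hx : x = 0 <;> simp [f, hx]
  · have h := cfc_add (a := C) (fun x => x) f
    rw [cfc_id' ℝ C] at h
    rw [← h, isUnit_cfc_iff _ C]
    intro x _
    by_cases hx : x = 0 <;> simp [f, hx]

lemma IsHermitian.star_eigenvectorBasis_dotProduct_mulVec {D : Matrix n n 𝕜} (hD : D.IsHermitian)
    (i : n) (z : n → 𝕜) :
    star ⇑(hD.eigenvectorBasis i) ⬝ᵥ D *ᵥ z =
      hD.eigenvalues i * (star ⇑(hD.eigenvectorBasis i) ⬝ᵥ z) := by
  have h : star ⇑(hD.eigenvectorBasis i) ᵥ* D = star (D *ᵥ ⇑(hD.eigenvectorBasis i)) := by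
    rw [star_mulVec, hD.eq]
  rw [dotProduct_mulVec, h, hD.mulVec_eigenvectorBasis, star_smul, smul_dotProduct, star_trivial,
    RCLike.real_smul_eq_coe_mul]

lemma IsHermitian.exists_star_eigenvectorBasis_dotProduct_ne_zero {D : Matrix n n 𝕜}
    (hD : D.IsHermitian) {y : n → 𝕜} (hy : y ≠ 0) :
    ∃ i, star ⇑(hD.eigenvectorBasis i) ⬝ᵥ y ≠ 0 := by
  by_contra! h
  refine hy (congrArg WithLp.ofLp (hD.eigenvectorBasis.repr.map_eq_zero_iff.mp ?_))
  ext i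
  rw [OrthonormalBasis.repr_apply_apply, EuclideanSpace.inner_eq_star_dotProduct,
    dotProduct_comm]
  exact h i

lemma IsHermitian.exists_mulVec_eq_smul_of_mem_range_inf {D : Matrix n n 𝕜} (hD : D.IsHermitian)
    {y : n → 𝕜} (hy : y ≠ 0) (hyD : y ∈ LinearMap.range (toLin' D))
    (hyD' : y ∈ LinearMap.range (toLin' (1 - D))) :
    ∃ x ≠ 0, ∃ t : 𝕜, t ≠ 0 ∧ t ≠ 1 ∧ D *ᵥ x = t • x := by
  obtain ⟨i, hi⟩ := hD.exists_star_eigenvectorBasis_dotProduct_ne_zero hy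
  obtain ⟨a, rfl⟩ := hyD
  obtain ⟨b, hb⟩ := hyD'
  simp only [toLin'_apply] at hi hb
  refine ⟨hD.eigenvectorBasis i, ?_, hD.eigenvalues i, ?_, ?_, ?_⟩
  · exact fun h => hD.eigenvectorBasis.orthonormal.ne_zero i (congrArg (WithLp.toLp 2) h)
  · rintro h
    rw [hD.star_eigenvectorBasis_dotProduct_mulVec, h, zero_mul] at hi
    exact hi rfl
  · intro h
    rw [← hb, sub_mulVec, one_mulVec, dotProduct_sub, hD.star_eigenvectorBasis_dotProduct_mulVec,
      h, one_mul, sub_self] at hi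
    exact hi rfl
  · rw [hD.mulVec_eigenvectorBasis, RCLike.real_smul_eq_coe_smul (K := 𝕜)]

lemma PosSemidef.exists_mulVec_eq_smul_mulVec_of_isUnit_add {A B : Matrix n n 𝕜}
    (hA : A.PosSemidef) (hB : B.PosSemidef) (hAB : IsUnit (A + B))
    (h : LinearMap.range (toLin' A) ⊓ LinearMap.range (toLin' B) ≠ ⊥) :
    ∃ u, A *ᵥ u ≠ 0 ∧ ∃ c : 𝕜, c ≠ 0 ∧ B *ᵥ u = c • A *ᵥ u := by
  set R := CFC.sqrt (A + B)
  have hRR : R * R = A + B := CFC.sqrt_mul_sqrt_self _ (hA.add hB).nonneg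
  have hdet : IsUnit R.det := (isUnit_iff_isUnit_det R).mp
    ((CFC.isUnit_sqrt_iff _ (hA.add hB).nonneg).mpr hAB)
  have hRS : R * R⁻¹ = 1 := mul_nonsing_inv R hdet
  have hSR : R⁻¹ * R = 1 := nonsing_inv_mul R hdet
  set S := R⁻¹
  have hS : S.IsHermitian := (CFC.sqrt_nonneg (A + B)).posSemidef.1.inv
  set D := S * A * S
  have hD : D.IsHermitian := by simpa [hS.eq] using isHermitian_conjTranspose_mul_mul S hA.1
  have hSBS : S * B * S = 1 - D := by
    rw [eq_sub_iff_add_eq, add_comm, ← add_mul, ← mul_add, ← hRR,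
      show S * (R * R) * S = (S * R) * (R * S) by simp only [Matrix.mul_assoc], hSR, hRS, one_mul]
  have to_congr : ∀ (M : Matrix n n 𝕜) z, S *ᵥ (M *ᵥ z) = (S * M * S) *ᵥ (R *ᵥ z) := by
    intro M z
    rw [mulVec_mulVec, mulVec_mulVec, Matrix.mul_assoc (S * M), hSR, Matrix.mul_one]
  have of_congr : ∀ (M : Matrix n n 𝕜) z, M *ᵥ (S *ᵥ z) = R *ᵥ ((S * M * S) *ᵥ z) := by
    intro M z
    rw [mulVec_mulVec, mulVec_mulVec, ← Matrix.mul_assoc, ← Matrix.mul_assoc, hRS,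
      Matrix.one_mul]
  obtain ⟨v, ⟨⟨a, ha⟩, ⟨b, hb⟩⟩, hv⟩ := (Submodule.ne_bot_iff _).mp h
  simp only [toLin'_apply] at ha hb
  have hy : S *ᵥ v ≠ 0 := fun h0 => hv <| by
    rw [← one_mulVec v, ← hRS, ← mulVec_mulVec, h0, mulVec_zero]
  obtain ⟨x, hx, t, ht0, ht1, hDx⟩ := hD.exists_mulVec_eq_smul_of_mem_range_inf hy
    ⟨R *ᵥ a, by rw [toLin'_apply, ← to_congr, ha]⟩
    ⟨R *ᵥ b, by rw [toLin'_apply, ← hSBS, ← to_congr, hb]⟩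
  have hRx : R *ᵥ x ≠ 0 := fun h0 => hx <| by
    rw [← one_mulVec x, ← hSR, ← mulVec_mulVec, h0, mulVec_zero]
  have hAu : A *ᵥ (S *ᵥ x) = t • R *ᵥ x := by rw [of_congr, hDx, mulVec_smul]
  have hBu : B *ᵥ (S *ᵥ x) = (1 - t) • R *ᵥ x := by
    rw [of_congr, hSBS, sub_mulVec, one_mulVec, hDx, mulVec_sub, mulVec_smul, sub_smul, one_smul]
  refine ⟨S *ᵥ x, hAu ▸ smul_ne_zero ht0 hRx, (1 - t) / t,
    div_ne_zero (sub_ne_zero.mpr ht1.symm) ht0, ?_⟩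
  rw [hAu, hBu, smul_smul, div_mul_cancel₀ _ ht0]

lemma PosSemidef.exists_mulVec_eq_smul_mulVec {A B : Matrix n n 𝕜} (hA : A.PosSemidef)
    (hB : B.PosSemidef) (h : LinearMap.range (toLin' A) ⊓ LinearMap.range (toLin' B) ≠ ⊥) :
    ∃ u, A *ᵥ u ≠ 0 ∧ ∃ c : 𝕜, c ≠ 0 ∧ B *ᵥ u = c • A *ᵥ u := by
  obtain ⟨P, hP, hABP, hunit⟩ := (hA.add hB).1.exists_isStarProjection_mul_eq_zero
  have hPH : P.IsHermitian := hP.isSelfAdjoint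
  have hAP : A * P = 0 := hA.mul_eq_zero_of_add_mul_eq_zero hB hABP
  have hBP : B * P = 0 := hB.mul_eq_zero_of_add_mul_eq_zero hA (by rwa [add_comm])
  have hPB : P * B = 0 := by
    simpa [hB.1.eq, hPH.eq] using congrArg (·ᴴ) hBP
  have hPA : P * A = 0 := by
    simpa [hA.1.eq, hPH.eq] using congrArg (·ᴴ) hAP
  have hrange : LinearMap.range (toLin' B) ≤ LinearMap.range (toLin' (B + P)) := by
    rintro _ ⟨b, rfl⟩
    refine ⟨b - P *ᵥ b, ?_⟩
    simp only [toLin'_apply]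
    rw [mulVec_sub, mulVec_mulVec, add_mul, hBP, hP.isIdempotentElem.eq, zero_add,
      add_mulVec, add_sub_cancel_right]
  obtain ⟨u, hu, c, hc, hcu⟩ := hA.exists_mulVec_eq_smul_mulVec_of_isUnit_add
    (hB.add hP.nonneg.posSemidef) (by rwa [← add_assoc])
    (ne_bot_of_le_ne_bot h (inf_le_inf_left _ hrange))
  have hPu : P *ᵥ u = 0 := by
    have := congrArg (P *ᵥ ·) hcu
    simpa only [mulVec_smul, mulVec_mulVec, mul_add, hPB, hPA, hP.isIdempotentElem.eq, zero_add,
      zero_mulVec, smul_zero] using this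
  rw [add_mulVec, hPu, add_zero] at hcu
  exact ⟨u, hu, c, hc, hcu⟩

lemma PosSemidef.sqrt_eq_cfcSqrt {A : Matrix n n 𝕜} (hA : A.PosSemidef) :
    hA.sqrt = CFC.sqrt A := by
  rw [CFC.sqrt_eq_real_sqrt A hA.nonneg, cfcₙ_eq_cfc, hA.1.cfc_eq, IsHermitian.cfc,
    Unitary.conjStarAlgAut_apply, PosSemidef.sqrt]

lemma PosSemidef.posSemidef_sqrt {A : Matrix n n 𝕜} (hA : A.PosSemidef) : hA.sqrt.PosSemidef := by
  rw [hA.sqrt_eq_cfcSqrt]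
  exact (CFC.sqrt_nonneg A).posSemidef

lemma PosSemidef.sqrt_mul_sqrt {A : Matrix n n 𝕜} (hA : A.PosSemidef) : hA.sqrt * hA.sqrt = A := by
  rw [hA.sqrt_eq_cfcSqrt, CFC.sqrt_mul_sqrt_self A hA.nonneg]

lemma IsHermitian.range_toLin'_mul_self {X : Matrix n n 𝕜} (hX : X.IsHermitian) :
    LinearMap.range (toLin' (X * X)) = LinearMap.range (toLin' X) := by
  refine Submodule.eq_of_le_of_finrank_eq ?_ ?_
  · rw [toLin'_mul]
    exact LinearMap.range_comp_le_range _ _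
  · have := rank_conjTranspose_mul_self X
    rwa [hX.eq] at this

lemma PosSemidef.range_toLin'_sqrt {A : Matrix n n 𝕜} (hA : A.PosSemidef) :
    LinearMap.range (toLin' hA.sqrt) = LinearMap.range (toLin' A) := by
  rw [← hA.posSemidef_sqrt.1.range_toLin'_mul_self, hA.sqrt_mul_sqrt]

lemma PosSemidef.trace_mul_eq_trace_sqrt_mul_mul_sqrt {σ : Matrix n n 𝕜} (hσ : σ.PosSemidef)
    (M : Matrix n n 𝕜) : trace (M * σ) = trace (hσ.sqrt * M * hσ.sqrt) := by
  calc trace (M * σ) = trace (M * (hσ.sqrt * hσ.sqrt)) := by rw [hσ.sqrt_mul_sqrt]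
    _ = trace (hσ.sqrt * M * hσ.sqrt) := by rw [trace_mul_comm, ← trace_mul_cycle]

lemma PosSemidef.inv_trace_smul_vecMulVec_mul {σ : Matrix n n 𝕜} (hσ : σ.PosSemidef) {a : 𝕜}
    (ha : a ≠ 0) (u : n → 𝕜) :
    (trace (a • vecMulVec u (star u) * σ))⁻¹ • (hσ.sqrt * (a • vecMulVec u (star u)) * hσ.sqrt) =
      lineProj (hσ.sqrt *ᵥ u) := by
  rw [hσ.trace_mul_eq_trace_sqrt_mul_mul_sqrt, hσ.posSemidef_sqrt.1.mul_smul_vecMulVec_mul,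
    trace_smul, trace_vecMulVec, lineProj, smul_smul]
  congr 1
  rw [smul_eq_mul, mul_inv, mul_comm, ← mul_assoc, mul_inv_cancel₀ ha, one_mul, dotProduct_comm]

lemma PosSemidef.trace_lineProj_mul_mem_Ioc {σ : Matrix n n 𝕜} (hσ : σ.PosSemidef)
    (htr : σ.trace = 1) {u : n → 𝕜} (hu : hσ.sqrt *ᵥ u ≠ 0) : trace (lineProj u * σ) ∈ Set.Ioc 0 1 := by
  have hX : hσ.sqrt.IsHermitian := hσ.posSemidef_sqrt.1
  have hu0 : u ≠ 0 := fun h => hu (by rw [h, mulVec_zero])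
  constructor
  · rw [hσ.trace_mul_eq_trace_sqrt_mul_mul_sqrt, lineProj, hX.mul_smul_vecMulVec_mul, trace_smul,
      trace_vecMulVec, smul_eq_mul]
    exact mul_pos (inv_pos.mpr (dotProduct_star_self_pos_iff.mpr hu0))
      (dotProduct_self_star_pos_iff.mpr hu)
  · have h1P : (1 - lineProj u).PosSemidef :=
      (isStarProjection_lineProj hu0).one_sub_nonneg.posSemidef
    have := (h1P.conjTranspose_mul_mul_same hσ.sqrt).trace_nonneg
    rwa [hX.eq, ← hσ.trace_mul_eq_trace_sqrt_mul_mul_sqrt, sub_mul, one_mul, trace_sub, htr,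
      sub_nonneg] at this

end Matrix

section Compatibility

variable {n : ℕ} {σ1 σ2 : Matrix (Fin n) (Fin n) ℂ}

lemma QSubjCompatible.range_inf_range_ne_bot {h1 : σ1.PosSemidef} {h2 : σ2.PosSemidef}
    (hc : QSubjCompatible h1 h2) :
    LinearMap.range (toLin' σ1) ⊓ LinearMap.range (toLin' σ2) ≠ ⊥ := by
  obtain ⟨X, _, -, E, -, -, hpos, x, hx⟩ := hc
  set M := h1.sqrt * E x * h1.sqrt with hMdef
  have ht1 : (E x * σ1).trace ≠ 0 := fun h => (hpos x).1.ne' (by rw [h, Complex.zero_re])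
  have hM : M ≠ 0 := fun h => ht1 <| by
    rw [h1.trace_mul_eq_trace_sqrt_mul_mul_sqrt, ← hMdef, h, trace_zero]
  have hM2 : M = ((E x * σ1).trace / (E x * σ2).trace) • (h2.sqrt * E x * h2.sqrt) := by
    rw [div_eq_mul_inv, ← smul_smul, ← hx, smul_smul, mul_inv_cancel₀ ht1, one_smul]
  have hle1 : LinearMap.range (toLin' M) ≤ LinearMap.range (toLin' σ1) := by
    rw [← h1.range_toLin'_sqrt, hMdef, Matrix.mul_assoc, toLin'_mul]
    exact LinearMap.range_comp_le_range _ _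
  have hle2 : LinearMap.range (toLin' M) ≤ LinearMap.range (toLin' σ2) := by
    rw [← h2.range_toLin'_sqrt, hM2, Matrix.mul_assoc, ← Matrix.mul_smul, toLin'_mul]
    exact LinearMap.range_comp_le_range _ _
  refine ne_bot_of_le_ne_bot ?_ (le_inf hle1 hle2)
  rwa [Ne, LinearMap.range_eq_bot, LinearEquiv.map_eq_zero_iff]

noncomputable def lineProjPOVM (u : Fin n → ℂ) : Fin 2 → Matrix (Fin n) (Fin n) ℂ :=
  ![(2 : ℂ)⁻¹ • lineProj u, 1 - (2 : ℂ)⁻¹ • lineProj u]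

lemma sum_lineProjPOVM (u : Fin n → ℂ) : ∑ i, lineProjPOVM u i = 1 := by
  simp [lineProjPOVM, Fin.sum_univ_two]

lemma posSemidef_lineProjPOVM {u : Fin n → ℂ} (hu : u ≠ 0) (i : Fin 2) :
    (lineProjPOVM u i).PosSemidef := by
  have hP := isStarProjection_lineProj hu
  have hhalf : (0 : ℂ) ≤ 2⁻¹ := inv_nonneg.mpr zero_le_two
  fin_cases i
  · exact hP.nonneg.posSemidef.smul hhalf
  · change (1 - (2 : ℂ)⁻¹ • lineProj u).PosSemidef
    rw [show 1 - (2 : ℂ)⁻¹ • lineProj u = (2 : ℂ)⁻¹ • (1 + (1 - lineProj u)) by module]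
    exact (PosSemidef.one.add hP.one_sub_nonneg.posSemidef).smul hhalf

lemma IsDensityMatrix.re_trace_lineProjPOVM_mul_pos {σ : Matrix (Fin n) (Fin n) ℂ}
    (h : IsDensityMatrix σ) {u : Fin n → ℂ} (hu : h.1.sqrt *ᵥ u ≠ 0) (i : Fin 2) :
    0 < (lineProjPOVM u i * σ).trace.re := by
  obtain ⟨hlo, hhi⟩ := h.1.trace_lineProj_mul_mem_Ioc h.2 hu
  have hre0 : 0 < (lineProj u * σ).trace.re := by simpa using (Complex.lt_def.mp hlo).1
  have hre1 : (lineProj u * σ).trace.re ≤ 1 := by simpa using (Complex.le_def.mp hhi).1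
  fin_cases i
  · change 0 < ((2 : ℂ)⁻¹ • lineProj u * σ).trace.re
    rw [smul_mul, trace_smul, smul_eq_mul, Complex.mul_re]
    norm_num
    linarith
  · change 0 < ((1 - (2 : ℂ)⁻¹ • lineProj u) * σ).trace.re
    rw [sub_mul, one_mul, trace_sub, h.2, smul_mul, trace_smul, smul_eq_mul]
    norm_num
    linarith

lemma Matrix.PosSemidef.inv_trace_lineProjPOVM_zero_mul {σ : Matrix (Fin n) (Fin n) ℂ}
    (h : σ.PosSemidef) {u : Fin n → ℂ} (hu : u ≠ 0) :
    (trace (lineProjPOVM u 0 * σ))⁻¹ • (h.sqrt * lineProjPOVM u 0 * h.sqrt) =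
      lineProj (h.sqrt *ᵥ u) := by
  rw [lineProjPOVM, cons_val_zero, lineProj, smul_smul]
  exact h.inv_trace_smul_vecMulVec_mul (by simpa using dotProduct_star_self_eq_zero.not.mpr hu) u

lemma qSubjCompatible_of_sqrt_mulVec_eq_smul (h1 : IsDensityMatrix σ1) (h2 : IsDensityMatrix σ2)
    {u : Fin n → ℂ} (hu : h1.1.sqrt *ᵥ u ≠ 0) {c : ℂ} (hc : c ≠ 0)
    (hcu : h2.1.sqrt *ᵥ u = c • h1.1.sqrt *ᵥ u) : QSubjCompatible h1.1 h2.1 := by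
  have hu0 : u ≠ 0 := fun h => hu (by rw [h, mulVec_zero])
  have hu2 : h2.1.sqrt *ᵥ u ≠ 0 := hcu ▸ smul_ne_zero hc hu
  refine ⟨Fin 2, inferInstance, inferInstance, lineProjPOVM u, posSemidef_lineProjPOVM hu0,
    sum_lineProjPOVM u, fun i => ⟨h1.re_trace_lineProjPOVM_mul_pos hu i,
      h2.re_trace_lineProjPOVM_mul_pos hu2 i⟩, 0, ?_⟩
  rw [h1.1.inv_trace_lineProjPOVM_zero_mul hu0, h2.1.inv_trace_lineProjPOVM_zero_mul hu0, hcu,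
    lineProj_smul hc]

end Compatibility

theorem qSubjCompatible_iff_ranges_intersect_general
    {n : ℕ} (σ1 σ2 : Matrix (Fin n) (Fin n) ℂ)
    (h1 : IsDensityMatrix σ1) (h2 : IsDensityMatrix σ2) :
    QSubjCompatible h1.1 h2.1 ↔
      LinearMap.range (Matrix.toLin' σ1) ⊓ LinearMap.range (Matrix.toLin' σ2) ≠ ⊥ := by
  refine ⟨QSubjCompatible.range_inf_range_ne_bot, fun h => ?_⟩
  rw [← h1.1.range_toLin'_sqrt, ← h2.1.range_toLin'_sqrt] at h
  obtain ⟨u, hu, c, hc, hcu⟩ :=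
    h1.1.posSemidef_sqrt.exists_mulVec_eq_smul_mulVec h2.1.posSemidef_sqrt h
  exact qSubjCompatible_of_sqrt_mulVec_eq_smul h1 h2 hu hc hcu

/-- Two density matrices on `ℂ^n` (`n ≥ 1`) are subjectively compatible iff
their ranges (column spaces) have nontrivial intersection. -/
theorem qSubjCompatible_iff_ranges_intersect
    {n : ℕ} (hn : 1 ≤ n) (σ1 σ2 : Matrix (Fin n) (Fin n) ℂ)
    (h1 : IsDensityMatrix σ1) (h2 : IsDensityMatrix σ2) :
    QSubjCompatible h1.1 h2.1 ↔
      LinearMap.range (Matrix.toLin' σ1) ⊓ LinearMap.range (Matrix.toLin' σ2) ≠ ⊥ :=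
  qSubjCompatible_iff_ranges_intersect_general σ1 σ2 h1 h2
end

section
/- Let n ≥ 1 and let X1, X2 be finite nonempty types. Let ρ : X1 → X2 → Matrix (Fin n) (Fin n) ℂ be a family with every ρ x1 x2 positive semidefinite and ∑ x1, ∑ x2, trace (ρ x1 x2) = 1; write ρ1 x1 = ∑ x2, ρ x1 x2, ρ2 x2 = ∑ x1, ρ x1 x2, and ρ_B = ∑ x1, ∑ x2, ρ x1 x2, and assume ρ_B is positive definite. Let ρ_B^{1/2} be the positive definite square root of ρ_B and R = (ρ_B^{1/2})⁻¹. Assume the conditional-independence condition: for all x1 : X1 and x2 : X2, R * (ρ x1 x2) * R = (R * (ρ1 x1) * R) * (R * (ρ2 x2) * R). Fix x1, x2 with the real part of trace (ρ x1 x2) strictly positive, and define the normalized states σ1 = (trace (ρ1 x1))⁻¹ • (ρ1 x1), σ2 = (trace (ρ2 x2))⁻¹ • (ρ2 x2), and σ_pooled = (trace (ρ x1 x2))⁻¹ • (ρ x1 x2). Then there exists a real constant c > 0 such that σ_pooled = c • (σ1 * ρ_B⁻¹ * σ2). -/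
open scoped ComplexOrder MatrixOrder

/-!
Write `S = ρ_B^{1/2}`. Conjugating the conditional-independence identity by `S` on both sides
gives the factorization `ρ x1 x2 = ρ1 x1 * ρ_B⁻¹ * ρ2 x2`, since `S⁻¹ * S⁻¹ = ρ_B⁻¹`. The three
traces are positive reals: each trace of a positive semidefinite matrix is nonnegative, and
`tr (ρ1 x1)` and `tr (ρ2 x2)` dominate `tr (ρ x1 x2)`. So the normalizations are positive real
rescalings of the factorization, and `c = tr (ρ1 x1) * tr (ρ2 x2) / tr (ρ x1 x2)`.
-/

namespace Matrix

variable {m : Type*} [Fintype m]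

theorem eq_mul_inv_mul_of_inv_conj_eq [DecidableEq m] {R : Type*} [CommRing R]
    {S A B C : Matrix m m R} (hS : IsUnit S)
    (h : S⁻¹ * A * S⁻¹ = (S⁻¹ * B * S⁻¹) * (S⁻¹ * C * S⁻¹)) :
    A = B * (S * S)⁻¹ * C := by
  have hS' : IsUnit S.det := (isUnit_iff_isUnit_det S).1 hS
  calc A = S * (S⁻¹ * A * S⁻¹) * S := by simp [Matrix.mul_assoc, hS']
    _ = S * S⁻¹ * B * (S⁻¹ * S⁻¹) * C * (S⁻¹ * S) := by rw [h]; simp only [Matrix.mul_assoc]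
    _ = B * (S * S)⁻¹ * C := by simp [hS', Matrix.mul_inv_rev]

theorem PosSemidef.trace_le_trace_sum {R : Type*} [Ring R] [PartialOrder R] [StarRing R]
    [IsOrderedAddMonoid R] {ι : Type*} [Fintype ι] {f : ι → Matrix m m R}
    (hf : ∀ i, (f i).PosSemidef) (i : ι) : (f i).trace ≤ (∑ j, f j).trace := by
  rw [trace_sum]
  exact Finset.single_le_sum (fun j _ => (hf j).trace_nonneg) (Finset.mem_univ i)

theorem exists_pos_smul_eq_smul_mul_mul_smul {𝕜 : Type*} [RCLike 𝕜] {B M C : Matrix m m 𝕜}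
    {t t₁ t₂ : 𝕜} (ht : 0 < t) (ht₁ : 0 < t₁) (ht₂ : 0 < t₂) :
    ∃ c : ℝ, 0 < c ∧ t⁻¹ • (B * M * C) = (c : 𝕜) • ((t₁⁻¹ • B) * M * (t₂⁻¹ • C)) := by
  obtain ⟨r, hr, rfl⟩ := RCLike.pos_iff_exists_ofReal.1 ht
  obtain ⟨r₁, hr₁, rfl⟩ := RCLike.pos_iff_exists_ofReal.1 ht₁
  obtain ⟨r₂, hr₂, rfl⟩ := RCLike.pos_iff_exists_ofReal.1 ht₂
  refine ⟨r₁ * r₂ / r, by positivity, ?_⟩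
  rw [Matrix.mul_smul, Matrix.smul_mul, Matrix.smul_mul, smul_smul, smul_smul]
  congr 1
  push_cast
  field_simp

end Matrix

theorem quantum_pooling_general
    {n : ℕ}
    {X1 X2 : Type} [Fintype X1] [Fintype X2]
    (ρ : X1 → X2 → Matrix (Fin n) (Fin n) ℂ)
    (hpsd : ∀ (a : X1) (b : X2), (ρ a b).PosSemidef)
    (hB : (∑ a, ∑ b, ρ a b).PosDef)
    (hCI : ∀ (a : X1) (b : X2),
      (CFC.sqrt (∑ a, ∑ b, ρ a b))⁻¹ * ρ a b * (CFC.sqrt (∑ a, ∑ b, ρ a b))⁻¹ =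
        ((CFC.sqrt (∑ a, ∑ b, ρ a b))⁻¹ * (∑ b', ρ a b') * (CFC.sqrt (∑ a, ∑ b, ρ a b))⁻¹) *
          ((CFC.sqrt (∑ a, ∑ b, ρ a b))⁻¹ * (∑ a', ρ a' b) * (CFC.sqrt (∑ a, ∑ b, ρ a b))⁻¹))
    (x1 : X1) (x2 : X2) (hpos : 0 < ((ρ x1 x2).trace).re) :
    ∃ c : ℝ, 0 < c ∧
      ((ρ x1 x2).trace)⁻¹ • ρ x1 x2 =
        (c : ℂ) • ((((∑ b, ρ x1 b).trace)⁻¹ • (∑ b, ρ x1 b)) *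
            (∑ a, ∑ b, ρ a b)⁻¹ *
          (((∑ a, ρ a x2).trace)⁻¹ • (∑ a, ρ a x2))) := by
  have hsqrt : IsUnit (CFC.sqrt (∑ a, ∑ b, ρ a b)) :=
    (CFC.isUnit_sqrt_iff _ hB.posSemidef.nonneg).2 hB.isUnit
  have hfactor : ρ x1 x2 = (∑ b, ρ x1 b) * (∑ a, ∑ b, ρ a b)⁻¹ * (∑ a, ρ a x2) := by
    simpa only [CFC.sqrt_mul_sqrt_self _ hB.posSemidef.nonneg] using
      Matrix.eq_mul_inv_mul_of_inv_conj_eq hsqrt (hCI x1 x2)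
  have ht : 0 < (ρ x1 x2).trace :=
    Complex.pos_iff.2 ⟨hpos, (Complex.nonneg_iff.1 (hpsd x1 x2).trace_nonneg).2⟩
  have ht₁ : 0 < (∑ b, ρ x1 b).trace :=
    ht.trans_le (Matrix.PosSemidef.trace_le_trace_sum (hpsd x1) x2)
  have ht₂ : 0 < (∑ a, ρ a x2).trace :=
    ht.trans_le (Matrix.PosSemidef.trace_le_trace_sum (hpsd · x2) x1)
  nth_rewrite 2 [hfactor]
  exact Matrix.exists_pos_smul_eq_smul_mul_mul_smul ht ht₁ ht₂

/-- **Quantum state pooling.**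
Let `ρ : X1 → X2 → Matrix (Fin n) (Fin n) ℂ` be a hybrid state over classical
variables `X1`, `X2` and a quantum region `B = ℂ^n` (each `ρ x1 x2` positive
semidefinite, total trace `1`), with reduced states `ρ1 x1 = ∑ x2, ρ x1 x2`,
`ρ2 x2 = ∑ x1, ρ x1 x2` and positive definite prior `ρB = ∑ x1, ∑ x2, ρ x1 x2`.
Assume the conditional-independence condition
`R * ρ x1 x2 * R = (R * ρ1 x1 * R) * (R * ρ2 x2 * R)` for all `x1`, `x2`, where
`R = (ρB^{1/2})⁻¹` is the inverse of the positive (semi)definite square root of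
`ρB`.  Then for any `x1`, `x2` with `Re (tr (ρ x1 x2)) > 0`, the pooled state
`σpooled = (tr (ρ x1 x2))⁻¹ • ρ x1 x2` satisfies
`σpooled = c • (σ1 * ρB⁻¹ * σ2)` for some real constant `c > 0`, where
`σ1 = (tr (ρ1 x1))⁻¹ • ρ1 x1` and `σ2 = (tr (ρ2 x2))⁻¹ • ρ2 x2`. -/
theorem quantum_pooling
    {n : ℕ} (hn : 1 ≤ n)
    {X1 X2 : Type} [Fintype X1] [Fintype X2] [Nonempty X1] [Nonempty X2]
    (ρ : X1 → X2 → Matrix (Fin n) (Fin n) ℂ)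
    (hpsd : ∀ (a : X1) (b : X2), (ρ a b).PosSemidef)
    (htr : ∑ a, ∑ b, (ρ a b).trace = 1)
    (hB : (∑ a, ∑ b, ρ a b).PosDef)
    (hCI : ∀ (a : X1) (b : X2),
      (CFC.sqrt (∑ a, ∑ b, ρ a b))⁻¹ * ρ a b * (CFC.sqrt (∑ a, ∑ b, ρ a b))⁻¹ =
        ((CFC.sqrt (∑ a, ∑ b, ρ a b))⁻¹ * (∑ b', ρ a b') * (CFC.sqrt (∑ a, ∑ b, ρ a b))⁻¹) *
          ((CFC.sqrt (∑ a, ∑ b, ρ a b))⁻¹ * (∑ a', ρ a' b) * (CFC.sqrt (∑ a, ∑ b, ρ a b))⁻¹))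
    (x1 : X1) (x2 : X2) (hpos : 0 < ((ρ x1 x2).trace).re) :
    ∃ c : ℝ, 0 < c ∧
      ((ρ x1 x2).trace)⁻¹ • ρ x1 x2 =
        (c : ℂ) • ((((∑ b, ρ x1 b).trace)⁻¹ • (∑ b, ρ x1 b)) *
            (∑ a, ∑ b, ρ a b)⁻¹ *
          (((∑ a, ρ a x2).trace)⁻¹ • (∑ a, ρ a x2))) :=
  quantum_pooling_general ρ hpsd hB hCI x1 x2 hpos
end
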